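/- Regularization error bound: let K, L > 0 satisfy K·√L ≥ 1. Then for all p, q ∈ ℝ, |A^δ(p,q) − A(p,q)| ≤ max( (4/(27K²))·|q| , (2/(3√(3L)))·|p| ). -/

import Mathlib

/-- The real cube root: `cbrt r = sgn(r) · |r|^{1/3}`. -/
noncomputable def cbrt (r : ℝ) : ℝ := Real.sign r * |r| ^ ((1 : ℝ) / 3)

/-- `A(p,q) = cbrt(p² q)`. -/
noncomputable def Afun (p q : ℝ) : ℝ := cbrt (p ^ 2 * q)

/-- The regularized function `A^δ(p,q) = sgn(q) · min(|A(p,q)|, K|p|, L|q|)`. -/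
noncomputable def Adelta (K L p q : ℝ) : ℝ :=
  Real.sign q * min (|Afun p q|) (min (K * |p|) (L * |q|))

/-!
Since `A^δ` keeps the sign of `A` and only truncates `|A| = (|p|²|q|)^{1/3}` to `K|p|` or `L|q|`,
the error is the amount `|A| - K|p|` or `|A| - L|q|` cut off. Both are bounded by the scaled
AM–GM inequality `(P²Q)^{1/3} ≤ (2tP + Q/t²)/3`, with `t = 3K/2` and `t = 1/√(3L)`
respectively.
-/

open Real

theorem sq_mul_rpow_third_le {a b : ℝ} (ha : 0 ≤ a) (hb : 0 ≤ b) :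
    (a ^ 2 * b) ^ ((1 : ℝ) / 3) ≤ (2 * a + b) / 3 := by
  have h := geom_mean_le_arith_mean3_weighted (w₁ := 1 / 3) (w₂ := 1 / 3) (w₃ := 1 / 3)
    (by norm_num) (by norm_num) (by norm_num) ha ha hb (by norm_num)
  have e : (a ^ 2 * b) ^ ((1 : ℝ) / 3)
      = a ^ ((1 : ℝ) / 3) * a ^ ((1 : ℝ) / 3) * b ^ ((1 : ℝ) / 3) := by
    rw [mul_rpow (by positivity) hb, ← rpow_natCast a 2, ← rpow_mul ha,
      ← rpow_add' ha (by norm_num)]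
    norm_num
  linarith

theorem sq_mul_rpow_third_le_of_pos {t P Q : ℝ} (ht : 0 < t) (hP : 0 ≤ P) (hQ : 0 ≤ Q) :
    (P ^ 2 * Q) ^ ((1 : ℝ) / 3) ≤ 2 * t / 3 * P + Q / (3 * t ^ 2) := by
  have h := sq_mul_rpow_third_le (mul_nonneg ht.le hP) (div_nonneg hQ (sq_nonneg t))
  have e : (t * P) ^ 2 * (Q / t ^ 2) = P ^ 2 * Q := by field_simp
  rw [e] at h
  convert h using 1
  field_simp

theorem sq_mul_rpow_third_sub_mul_left_le {K P Q : ℝ} (hK : 0 < K) (hP : 0 ≤ P) (hQ : 0 ≤ Q) :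
    (P ^ 2 * Q) ^ ((1 : ℝ) / 3) - K * P ≤ 4 / (27 * K ^ 2) * Q := by
  have h := sq_mul_rpow_third_le_of_pos (t := 3 * K / 2) (by positivity) hP hQ
  have e : Q / (3 * (3 * K / 2) ^ 2) = 4 / (27 * K ^ 2) * Q := by field_simp; ring
  rw [e] at h
  linarith

theorem sq_mul_rpow_third_sub_mul_right_le {L P Q : ℝ} (hL : 0 < L) (hP : 0 ≤ P)
    (hQ : 0 ≤ Q) :
    (P ^ 2 * Q) ^ ((1 : ℝ) / 3) - L * Q ≤ 2 / (3 * √(3 * L)) * P := by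
  have hs : 0 < √(3 * L) := sqrt_pos.mpr (by positivity)
  have h := sq_mul_rpow_third_le_of_pos (t := 1 / √(3 * L)) (by positivity) hP hQ
  have e : Q / (3 * (1 / √(3 * L)) ^ 2) = L * Q := by
    rw [div_pow, sq_sqrt (by positivity)]; field_simp
  have e' : 2 * (1 / √(3 * L)) / 3 * P = 2 / (3 * √(3 * L)) * P := by ring
  rw [e, e'] at h
  linarith

theorem abs_cbrt (r : ℝ) : |cbrt r| = |r| ^ ((1 : ℝ) / 3) := by
  rw [cbrt, abs_mul, abs_of_nonneg (rpow_nonneg (abs_nonneg r) _)]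
  rcases sign_apply_eq r with h | h | h
  · simp [h]
  · simp [sign_eq_zero_iff.mp h]
  · simp [h]

theorem cbrt_eq_sign_mul_abs (r : ℝ) : cbrt r = sign r * |cbrt r| := by
  rw [abs_cbrt, cbrt]

theorem abs_sign_le_one (r : ℝ) : |sign r| ≤ 1 := by
  rcases sign_apply_eq r with h | h | h <;> simp [h]

theorem sign_mul_of_pos {a : ℝ} (ha : 0 < a) (r : ℝ) : sign (a * r) = sign r := by
  rcases lt_trichotomy r 0 with h | rfl | h
  · rw [sign_of_neg h, sign_of_neg (mul_neg_of_pos_of_neg ha h)]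
  · simp
  · rw [sign_of_pos h, sign_of_pos (mul_pos ha h)]

theorem abs_Afun (p q : ℝ) : |Afun p q| = (|p| ^ 2 * |q|) ^ ((1 : ℝ) / 3) := by
  rw [Afun, abs_cbrt, abs_mul, abs_pow]

theorem Afun_eq_sign_mul_abs (p q : ℝ) : Afun p q = sign q * |Afun p q| := by
  rcases eq_or_ne p 0 with rfl | hp
  · simp [Afun, cbrt]
  · rw [Afun]
    nth_rewrite 1 [cbrt_eq_sign_mul_abs]
    rw [sign_mul_of_pos (by positivity)]

theorem abs_mul_min_abs_sub_le {a s : ℝ} (c : ℝ) (ha : a = s * |a|) (hs : |s| ≤ 1) :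
    |s * min |a| c - a| ≤ |a| - min |a| c := by
  have hle : min |a| c ≤ |a| := min_le_left _ _
  have hdiff : s * min |a| c - a = s * (min |a| c - |a|) := by linear_combination -ha
  calc |s * min |a| c - a| = |s| * (|a| - min |a| c) := by
        rw [hdiff, abs_mul, abs_sub_comm, abs_of_nonneg (sub_nonneg.mpr hle)]
    _ ≤ |a| - min |a| c := mul_le_of_le_one_left (sub_nonneg.mpr hle) hs

theorem sub_min_min_le {α : Type*} [AddCommGroup α] [LinearOrder α] [IsOrderedAddMonoid α]
    {a x y u v : α} (hx : a - x ≤ u) (hy : a - y ≤ v) (hu : 0 ≤ u) :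
    a - min a (min x y) ≤ max u v := by
  rcases le_total a (min x y) with h | h
  · simp [min_eq_left h, hu]
  · rw [min_eq_right h]
    rcases min_choice x y with hxy | hxy <;> rw [hxy]
    · exact le_max_of_le_left hx
    · exact le_max_of_le_right hy

theorem Adelta_error_bound_general (K L : ℝ) (hK : 0 < K) (hL : 0 < L) :
    ∀ p q : ℝ,
      |Adelta K L p q - Afun p q| ≤
        max ((4 / (27 * K ^ 2)) * |q|) ((2 / (3 * Real.sqrt (3 * L))) * |p|) := by
  intro p q
  have cut_K : |Afun p q| - K * |p| ≤ 4 / (27 * K ^ 2) * |q| := by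
    rw [abs_Afun]; exact sq_mul_rpow_third_sub_mul_left_le hK (abs_nonneg p) (abs_nonneg q)
  have cut_L : |Afun p q| - L * |q| ≤ 2 / (3 * √(3 * L)) * |p| := by
    rw [abs_Afun]; exact sq_mul_rpow_third_sub_mul_right_le hL (abs_nonneg p) (abs_nonneg q)
  calc |Adelta K L p q - Afun p q|
      ≤ |Afun p q| - min |Afun p q| (min (K * |p|) (L * |q|)) :=
        abs_mul_min_abs_sub_le _ (Afun_eq_sign_mul_abs p q) (abs_sign_le_one q)
    _ ≤ _ := sub_min_min_le cut_K cut_L (by positivity)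

/-- Regularization error bound: for `K√L ≥ 1`,
`|A^δ(p,q) − A(p,q)| ≤ max((4/(27K²))|q|, (2/(3√(3L)))|p|)`. -/
theorem Adelta_error_bound (K L : ℝ) (hK : 0 < K) (hL : 0 < L)
    (h1 : 1 ≤ K * Real.sqrt L) :
    ∀ p q : ℝ,
      |Adelta K L p q - Afun p q| ≤
        max ((4 / (27 * K ^ 2)) * |q|) ((2 / (3 * Real.sqrt (3 * L))) * |p|) :=
  Adelta_error_bound_general K L hK hL
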